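/- Exclusion property: if G(X) = H(X_C) almost surely for some strict subset C of {1,...,d} and some function H on {0,1}^|C|, then the coefficients β_A^(G) in the multivariate Bernoulli Hoeffding decomposition of G vanish for all A not contained in C, and coincide with the coefficients β_A^(H) of H for all A ⊆ C. -/
import Mathlib


open Finset

noncomputable section

/-- Marginal probability `P(X_A = x_A)` for a mass function `p` on `{0,1}^d`. -/
def margProb {d : ℕ} (p : (Fin d → Bool) → ℝ) (A : Finset (Fin d)) (x : Fin d → Bool) : ℝ :=
  ∑ y ∈ univ.filter (fun y : Fin d → Bool => ∀ i ∈ A, y i = x i), p y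

/-- The family `e_A(x_A) = (-1)^(∑_{j∈A} x_j) / P(X_A = x_A)`. -/
def eFun {d : ℕ} (p : (Fin d → Bool) → ℝ) (A : Finset (Fin d)) (x : Fin d → Bool) : ℝ :=
  (-1 : ℝ) ^ (∑ j ∈ A, if x j then (1 : ℕ) else 0) / margProb p A x

/-- Expectation of `f(X)` under the mass function `p`. -/
def expec {d : ℕ} (p : (Fin d → Bool) → ℝ) (f : (Fin d → Bool) → ℝ) : ℝ :=
  ∑ x, p x * f x

/-- The Walsh sign `(-1)^(∑_{j∈A} x_j)`. -/
def wSign {d : ℕ} (A : Finset (Fin d)) (x : Fin d → Bool) : ℝ :=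
  (-1 : ℝ) ^ (∑ j ∈ A, if x j then (1 : ℕ) else 0)

/-- The set of configurations supported in `A`. -/
def suppSet {d : ℕ} (A : Finset (Fin d)) : Finset (Fin d → Bool) :=
  univ.filter (fun x : Fin d → Bool => ∀ j, j ∉ A → x j = false)

lemma margProb_congr {d : ℕ} (p : (Fin d → Bool) → ℝ) (B : Finset (Fin d))
    {x y : Fin d → Bool} (h : ∀ i ∈ B, x i = y i) :
    margProb p B x = margProb p B y := by
  unfold margProb
  apply Finset.sum_congr _ (fun _ _ => rfl)
  apply Finset.filter_congr
  intro z _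
  constructor
  · intro hz i hi; rw [hz i hi, h i hi]
  · intro hz i hi; rw [hz i hi, ← h i hi]

lemma eFun_congr {d : ℕ} (p : (Fin d → Bool) → ℝ) (B : Finset (Fin d))
    {x y : Fin d → Bool} (h : ∀ i ∈ B, x i = y i) :
    eFun p B x = eFun p B y := by
  unfold eFun
  rw [margProb_congr p B h]
  congr 2
  exact Finset.sum_congr rfl (fun j hj => by rw [h j hj])

lemma margProb_pos {d : ℕ} (p : (Fin d → Bool) → ℝ) (hpos : ∀ x, 0 < p x)
    (B : Finset (Fin d)) (x : Fin d → Bool) : 0 < margProb p B x := by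
  unfold margProb
  apply Finset.sum_pos (fun y _ => hpos y)
  exact ⟨x, by simp⟩

/-- Flipping a coordinate in `A` flips the Walsh sign. -/
lemma wSign_flip {d : ℕ} (A : Finset (Fin d)) (x : Fin d → Bool) {j : Fin d} (hj : j ∈ A) :
    wSign A (Function.update x j (!x j)) = - wSign A x := by
  unfold wSign
  rw [← Finset.sum_erase_add A _ hj, ← Finset.sum_erase_add A _ hj]
  have herase : ∑ i ∈ A.erase j, (if Function.update x j (!x j) i then (1:ℕ) else 0)
      = ∑ i ∈ A.erase j, (if x i then (1:ℕ) else 0) := by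
    apply Finset.sum_congr rfl
    intro i hi
    rw [Function.update_of_ne (Finset.ne_of_mem_erase hi)]
  rw [herase, Function.update_self]
  cases hx : x j <;> simp [pow_succ]

/-- Φ_A kills `e_B` when `A ⊄ B`. -/
lemma phi_zero {d : ℕ} (p : (Fin d → Bool) → ℝ) (A B : Finset (Fin d)) (hAB : ¬ A ⊆ B) :
    ∑ x ∈ suppSet A, wSign A x * eFun p B x = 0 := by
  obtain ⟨j, hjA, hjB⟩ := Finset.not_subset.mp hAB
  have g_mem : ∀ x ∈ suppSet A, Function.update x j (!x j) ∈ suppSet A := by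
    intro x hx
    simp only [suppSet, Finset.mem_filter, Finset.mem_univ, true_and] at hx ⊢
    intro i hi
    rw [Function.update_of_ne (by rintro rfl; exact hi hjA)]
    exact hx i hi
  have hg1 : ∀ x ∈ suppSet A, wSign A x * eFun p B x
      + wSign A (Function.update x j (!x j)) * eFun p B (Function.update x j (!x j)) = 0 := by
    intro x hx
    have he : eFun p B (Function.update x j (!x j)) = eFun p B x := by
      apply eFun_congr
      intro i hi
      rw [Function.update_of_ne (by rintro rfl; exact hjB hi)]
    rw [he, wSign_flip A x hjA]
    ring
  have hg3 : ∀ x ∈ suppSet A, wSign A x * eFun p B x ≠ 0 → Function.update x j (!x j) ≠ x := by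
    intro x hx hne hcontra
    have := congrFun hcontra j
    rw [Function.update_self] at this
    cases x j <;> simp at this
  have hg4 : ∀ x ∈ suppSet A,
      Function.update (Function.update x j (!x j)) j (!(Function.update x j (!x j) j)) = x := by
    intro x hx
    simp [Function.update_idem, Function.update_eq_self]
  exact Finset.sum_involution (fun x _ => Function.update x j (!x j))
    (fun x hx => hg1 x hx) (fun x hx => hg3 x hx) (fun x hx => g_mem x hx)
    (fun x hx => hg4 x hx)

/-- Φ_A(e_A) is positive. -/
lemma phi_diag_pos {d : ℕ} (p : (Fin d → Bool) → ℝ) (hpos : ∀ x, 0 < p x)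
    (A : Finset (Fin d)) :
    0 < ∑ x ∈ suppSet A, wSign A x * eFun p A x := by
  have hterm : ∀ x ∈ suppSet A, wSign A x * eFun p A x = 1 / margProb p A x := by
    intro x _
    unfold wSign eFun
    rw [div_eq_mul_inv, div_eq_mul_inv, ← mul_assoc, ← pow_add]
    congr 1
    exact Even.neg_one_pow ⟨_, rfl⟩
  rw [Finset.sum_congr rfl hterm]
  apply Finset.sum_pos
  · intro x _
    exact div_pos one_pos (margProb_pos p hpos A x)
  · exact ⟨fun _ => false, by simp [suppSet]⟩

/-- One induction step: if all strict-superset coefficients vanish, so does `c A`. -/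
lemma coeff_step {d : ℕ} (p : (Fin d → Bool) → ℝ) (hpos : ∀ x, 0 < p x)
    (c : Finset (Fin d) → ℝ)
    (hc : ∀ x, ∑ B : Finset (Fin d), c B * eFun p B x = 0)
    (A : Finset (Fin d)) (hsup : ∀ B, A ⊂ B → c B = 0) : c A = 0 := by
  have h0 : ∑ x ∈ suppSet A, wSign A x * (∑ B : Finset (Fin d), c B * eFun p B x) = 0 := by
    apply Finset.sum_eq_zero
    intro x _
    rw [hc x, mul_zero]
  have h1 : ∑ x ∈ suppSet A, wSign A x * (∑ B : Finset (Fin d), c B * eFun p B x)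
      = ∑ B : Finset (Fin d), c B * ∑ x ∈ suppSet A, wSign A x * eFun p B x := by
    simp_rw [Finset.mul_sum]
    rw [Finset.sum_comm]
    apply Finset.sum_congr rfl
    intro B _
    apply Finset.sum_congr rfl
    intro x _
    ring
  have h2 : ∑ B : Finset (Fin d), c B * ∑ x ∈ suppSet A, wSign A x * eFun p B x
      = c A * ∑ x ∈ suppSet A, wSign A x * eFun p A x := by
    apply Finset.sum_eq_single A
    · intro B _ hBA
      by_cases hsub : A ⊆ B
      · rw [hsup B (Finset.ssubset_iff_subset_ne.mpr ⟨hsub, Ne.symm hBA⟩), zero_mul]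
      · rw [phi_zero p A B hsub, mul_zero]
    · intro h; exact absurd (Finset.mem_univ A) h
  rw [h1, h2] at h0
  have := phi_diag_pos p hpos A
  exact (mul_eq_zero.mp h0).resolve_right (by linarith)

/-- Uniqueness of coefficients: a vanishing combination has vanishing coefficients. -/
lemma coeff_unique {d : ℕ} (p : (Fin d → Bool) → ℝ) (hpos : ∀ x, 0 < p x)
    (c : Finset (Fin d) → ℝ)
    (hc : ∀ x, ∑ B : Finset (Fin d), c B * eFun p B x = 0) :
    ∀ A, c A = 0 := by
  have key : ∀ n : ℕ, ∀ A : Finset (Fin d), d - A.card < n → c A = 0 := by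
    intro n
    induction n with
    | zero => intro A hA; omega
    | succ n ih =>
      intro A hA
      apply coeff_step p hpos c hc
      intro B hB
      apply ih
      have h1 : A.card < B.card := Finset.card_lt_card hB
      have h2 : B.card ≤ d := by
        have := Finset.card_le_card (Finset.subset_univ B)
        simpa using this
      omega
  intro A
  exact key (d + 1) A (by omega)

/-- Exclusion property: if `G(X) = H(X_C)` a.s. for a strict subset `C` and `H`
depends only on the coordinates in `C`, then in the Hoeffding decompositions
`β_A^{(G)} = β_A^{(H)}` for `A ⊆ C` and `β_A^{(G)} = 0` otherwise. -/
theorem exclusion_property {d : ℕ}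
    (p : (Fin d → Bool) → ℝ) (hpos : ∀ x, 0 < p x) (hsum : ∑ x, p x = 1)
    (C : Finset (Fin d)) (hC : C ⊂ univ)
    (G H : (Fin d → Bool) → ℝ)
    (hHdep : ∀ x y : Fin d → Bool, (∀ i ∈ C, x i = y i) → H x = H y)
    (hGH : ∀ x, G x = H x)
    (βG βH : Finset (Fin d) → ℝ)
    (hβG : ∀ x, G x = ∑ A : Finset (Fin d), βG A * eFun p A x)
    (hβH : ∀ x, H x = ∑ A ∈ C.powerset, βH A * eFun p A x) :
    ∀ A : Finset (Fin d), (A ⊆ C → βG A = βH A) ∧ (¬ A ⊆ C → βG A = 0) := by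
  set c : Finset (Fin d) → ℝ := fun B => βG B - (if B ⊆ C then βH B else 0) with hcdef
  have hH : ∀ x, ∑ B : Finset (Fin d), (if B ⊆ C then βH B else 0) * eFun p B x = H x := by
    intro x
    rw [hβH x]
    have hpow : C.powerset = univ.filter (fun B : Finset (Fin d) => B ⊆ C) := by
      ext B; simp
    rw [hpow, Finset.sum_filter]
    apply Finset.sum_congr rfl
    intro B _
    by_cases h : B ⊆ C <;> simp [h]
  have hzero : ∀ x, ∑ B : Finset (Fin d), c B * eFun p B x = 0 := by
    intro x
    have : ∑ B : Finset (Fin d), c B * eFun p B x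
        = (∑ B : Finset (Fin d), βG B * eFun p B x)
          - ∑ B : Finset (Fin d), (if B ⊆ C then βH B else 0) * eFun p B x := by
      rw [← Finset.sum_sub_distrib]
      apply Finset.sum_congr rfl
      intro B _
      simp only [hcdef]
      ring
    rw [this, ← hβG x, hH x, hGH x, sub_self]
  have hc0 := coeff_unique p hpos c hzero
  intro A
  constructor
  · intro hA
    have := hc0 A
    simp only [hcdef, hA, if_pos] at this
    linarith
  · intro hA
    have := hc0 A
    simp only [hcdef, hA, if_neg, not_false_iff] at this
    linarith
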